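/- arXiv:2204.04976 — 4 statements merged into one kernel-verified Lean document; each statement's English description precedes it below -/
import Mathlib

section
/- For every integer k ≥ 1, the Hirzebruch–Jung continued fraction expansion of (2k+1)²/(2(2k+1)−1) is [k+1, 5, 2, 2, …, 2] with k−1 twos. -/
/-- Evaluation of a Hirzebruch–Jung continued fraction `[a₁, …, a_r]`, i.e.
`a₁ − 1/(a₂ − 1/(⋯ − 1/a_r))`. -/
def hjEval : List ℚ → ℚ
  | [] => 0
  | [a] => a
  | a :: l => a - 1 / hjEval l

theorem hjEval_cons_cons (a b : ℚ) (l : List ℚ) :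
    hjEval (a :: b :: l) = a - 1 / hjEval (b :: l) := rfl

theorem hjEval_cons_replicate_two (a : ℚ) (n : ℕ) :
    hjEval (a :: List.replicate n 2) = a - n / (n + 1) := by
  induction n generalizing a with
  | zero => simp [hjEval]
  | succ n ih =>
    have : (2 : ℚ) - n / (n + 1) = (n + 2) / (n + 1) := by field_simp; ring
    rw [List.replicate_succ, hjEval_cons_cons, ih, this, one_div_div]
    push_cast
    ring

theorem hjEval_wahl (n : ℕ) :
    hjEval (((n : ℚ) + 2) :: 5 :: List.replicate n 2) = (2 * n + 3) ^ 2 / (4 * n + 5) := by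
  have : (5 : ℚ) - n / (n + 1) = (4 * n + 5) / (n + 1) := by field_simp; ring
  rw [hjEval_cons_cons, hjEval_cons_replicate_two, this, one_div_div]
  have : (4 * n + 5 : ℚ) ≠ 0 := by positivity
  field_simp
  ring

/-- The Hirzebruch–Jung continued fraction of `(2k+1)²/(2(2k+1)−1)` is
`[k+1, 5, 2, …, 2]` with `k−1` twos: its entries are all `≥ 2` and it evaluates to
`(2k+1)²/(4k+1)`. -/
theorem stmt3 (k : ℕ) (hk : 1 ≤ k) :
    hjEval (((k : ℚ) + 1) :: 5 :: List.replicate (k - 1) 2)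
      = ((2 * k + 1 : ℚ)) ^ 2 / (2 * (2 * k + 1) - 1) ∧
    ∀ a ∈ (((k : ℚ) + 1) :: 5 :: List.replicate (k - 1) 2), 2 ≤ a := by
  obtain ⟨n, rfl⟩ := Nat.exists_eq_add_of_le' hk
  simp only [Nat.add_sub_cancel, Nat.cast_add, Nat.cast_one, add_assoc, one_add_one_eq_two]
  refine ⟨by rw [hjEval_wahl]; ring, ?_⟩
  simp only [List.mem_cons, List.mem_replicate]
  rintro a (rfl | rfl | ⟨-, rfl⟩)
  · linarith [n.cast_nonneg (α := ℚ)]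
  · norm_num
  · rfl
end

section
/- Let f, p be integers with 1 < p < f/2 and gcd(p,f)=1, and let m₁', a₁' be the unique integers with 1 < m₁' < f, 0 < a₁' < m₁', and m₁'·p − a₁'·f = 1. Set m₂' = 2f − m₁' and a₂' = m₂' + a₁' − 2p. Then m₁'·m₂' − m₁'·a₂' − m₂'·a₁' = 2 and gcd(m₂', a₂') = 1. -/
/-! Substituting `m₂'` and `a₂'` gives `δ = 2·(m₁'·p − a₁'·f)`, and the Bézout relation for
`(m₁', a₁')` transports to `(f − p)·m₂' − f·a₂' = m₁'·p − a₁'·f`. -/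

theorem delta_eq_two_of_bezout {f p m a : ℤ} (h : m * p - a * f = 1) :
    m * (2 * f - m) - m * (2 * f - m + a - 2 * p) - (2 * f - m) * a = 2 := by
  linear_combination 2 * h

theorem isCoprime_of_bezout {f p m a : ℤ} (h : m * p - a * f = 1) :
    IsCoprime (2 * f - m) (2 * f - m + a - 2 * p) :=
  ⟨f - p, -f, by linear_combination h⟩

theorem stmt6_general (f p m1' a1' m2' a2' : ℤ)
    (hbez : m1' * p - a1' * f = 1)
    (hm2 : m2' = 2 * f - m1') (ha2 : a2' = m2' + a1' - 2 * p) :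
    m1' * m2' - m1' * a2' - m2' * a1' = 2 ∧ Int.gcd m2' a2' = 1 := by
  subst hm2 ha2
  exact ⟨delta_eq_two_of_bezout hbez, Int.isCoprime_iff_gcd_eq_one.mp (isCoprime_of_bezout hbez)⟩

/-- First extremal P-resolution associated to `(f,p)`: with `m₁'·p − a₁'·f = 1`,
`m₂' = 2f − m₁'`, `a₂' = m₂' + a₁' − 2p`, one has `δ = 2` (with `c = 1`) and
`gcd(m₂', a₂') = 1`. -/
theorem stmt6 (f p m1' a1' m2' a2' : ℤ)
    (hp : 1 < p) (hpf : 2 * p < f) (hgcd : Int.gcd p f = 1)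
    (hm1 : 1 < m1') (hm1f : m1' < f) (ha1 : 0 < a1') (ha1m : a1' < m1')
    (hbez : m1' * p - a1' * f = 1)
    (hm2 : m2' = 2 * f - m1') (ha2 : a2' = m2' + a1' - 2 * p) :
    m1' * m2' - m1' * a2' - m2' * a1' = 2 ∧ Int.gcd m2' a2' = 1 :=
  stmt6_general f p m1' a1' m2' a2' hbez hm2 ha2
end

section
/- Let f, p be integers with 1 < p < f/2 and gcd(p,f)=1; let m₂', q be the unique integers with 1 < m₂' < f, 0 < q < m₂', and q·f − m₂'·p = 1. Set a₂' = m₂' − q, m₁' = 2f − m₂', a₁' = 2p − q. Then m₁'·m₂' − m₁'·a₂' − m₂'·a₁' = 2 and gcd(m₁', a₁') = 1. -/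
theorem IsCoprime.two_mul_sub_of_mul_sub_mul_eq_one {R : Type*} [CommRing R] {f p m q : R}
    (h : q * f - m * p = 1) : IsCoprime (2 * f - m) (2 * p - q) :=
  ⟨p, -f, by linear_combination h⟩

theorem stmt8_general (f p m1' a1' m2' a2' q : ℤ)
    (hbez : q * f - m2' * p = 1)
    (ha2 : a2' = m2' - q) (hm1 : m1' = 2 * f - m2') (ha1 : a1' = 2 * p - q) :
    m1' * m2' - m1' * a2' - m2' * a1' = 2 ∧ Int.gcd m1' a1' = 1 := by
  subst ha2 hm1 ha1
  refine ⟨by linear_combination 2 * hbez, ?_⟩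
  exact Int.isCoprime_iff_gcd_eq_one.mp (.two_mul_sub_of_mul_sub_mul_eq_one hbez)

/-- Second extremal P-resolution associated to `(f,p)`: with `q·f − m₂'·p = 1`,
`a₂' = m₂' − q`, `m₁' = 2f − m₂'`, `a₁' = 2p − q`, one has `δ = 2` (with `c = 1`) and
`gcd(m₁', a₁') = 1`. -/
theorem stmt8 (f p m1' a1' m2' a2' q : ℤ)
    (hp : 1 < p) (hpf : 2 * p < f) (hgcd : Int.gcd p f = 1)
    (hm2 : 1 < m2') (hm2f : m2' < f) (hq : 0 < q) (hqm : q < m2')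
    (hbez : q * f - m2' * p = 1)
    (ha2 : a2' = m2' - q) (hm1 : m1' = 2 * f - m2') (ha1 : a1' = 2 * p - q) :
    m1' * m2' - m1' * a2' - m2' * a1' = 2 ∧ Int.gcd m1' a1' = 1 :=
  stmt8_general f p m1' a1' m2' a2' q hbez ha2 hm1 ha1
end

section
/- The element w = (−Z^{δ−1} + XY)/Y is integral over ℂ[X,Y,Z]/(XYZ − Y^δ − Z^δ): it satisfies the monic equation w² − wX + Y^{δ−2}Z^{δ−2} = 0 in the fraction field. -/
open Polynomial

theorem isIntegral_of_sq_sub_mul_add_eq_zero {R A : Type*} [CommRing R] [CommRing A]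
    [Algebra R A] {w : A} (a b : R)
    (h : w ^ 2 - w * algebraMap R A a + algebraMap R A b = 0) : IsIntegral R w := by
  refine ⟨X ^ 2 - C a * X + C b, by monicity!, ?_⟩
  simp only [eval₂_add, eval₂_sub, eval₂_mul, eval₂_pow, eval₂_X, eval₂_C]
  linear_combination h

theorem sq_sub_mul_add_eq_zero_of_mul_mul_eq (d : ℕ) {K : Type*} [Field K] {x y z : K}
    (hrel : x * y * z = y ^ (d + 2) + z ^ (d + 2)) (hy : y ≠ 0) :
    letI w : K := (-z ^ (d + 1) + x * y) / y
    w ^ 2 - w * x + y ^ d * z ^ d = 0 := by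
  -- times `y²`, the left side is `-z^d (x y z - y^(d+2) - z^(d+2))`
  field_simp
  linear_combination (-z ^ d) * hrel

/-- The element `w = (−Z^{δ−1} + XY)/Y` of the function field of the surface
`(XYZ = Y^δ + Z^δ)` satisfies the monic equation `w² − wX + Y^{δ−2}Z^{δ−2} = 0`,
hence is integral over the coordinate ring (the subring generated by `x, y, z`). -/
theorem stmt14 (δ : ℕ) (hδ : 2 ≤ δ) (K : Type*) [Field K] (x y z : K)
    (hrel : x * y * z = y ^ δ + z ^ δ) (hy : y ≠ 0) :
    letI w : K := (-z ^ (δ - 1) + x * y) / y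
    w ^ 2 - w * x + y ^ (δ - 2) * z ^ (δ - 2) = 0 ∧
    IsIntegral (Subring.closure ({x, y, z} : Set K)) w := by
  obtain ⟨d, rfl⟩ : ∃ d, δ = d + 2 := ⟨δ - 2, by omega⟩
  have hw := sq_sub_mul_add_eq_zero_of_mul_mul_eq d hrel hy
  simp only [Nat.add_sub_cancel, show d + 2 - 1 = d + 1 from rfl] at hw ⊢
  refine ⟨hw, ?_⟩
  have mem {t : K} (ht : t ∈ ({x, y, z} : Set K)) : t ∈ Subring.closure {x, y, z} :=
    Subring.subset_closure ht
  exact isIntegral_of_sq_sub_mul_add_eq_zero ⟨x, mem (by simp)⟩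
    (⟨y, mem (by simp)⟩ ^ d * ⟨z, mem (by simp)⟩ ^ d) hw
end
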